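/- For nonnegative integers k and n, the Hankel determinant d_0^{(k)}(n,t) = \det( M_{i+j,k}(t) )_{i,j=0}^{n-1} (with d_0^{(k)}(0,t) = 1) satisfies: d_0^{(k)}((k+1)n, t) = (-1)^{\binom{k+1}{2} n}, and d_0^{(k)}(n,t) = 0 whenever n is not divisible by k+1. -/

import Mathlib

/-!
Let `U_c` be the polynomials in `x` with `U_0 = 1` and `x U_c = U_{c-1} + t U_c + U_{c+1}`, so
that `x^n = ∑_c M_{n,c} U_c`. The Hankel matrix factors as `M G Mᵀ` with `M = (M_{i,a})`
unitriangular and `G_{ab}` the multiplicity of `U_k` in `U_a U_b` (a Clebsch–Gordan rule); here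
the factorization is proved directly, from the symmetry of the Jacobi operator
`v ↦ v(· - 1) + t v + v(· + 1)` and its commutation with `G`. Hence the determinant is the
integer `det G`. Subtracting from each row of `G` the row two above leaves the sparse matrix
`B_{ab} = [b = a + k] + [a + b = k, a > 0] - [a = b + k + 2]`. Row operations give
`det B_{n + 2k + 2} = det B_n` for `n ≥ k + 1`, and for `n < 3k + 3` the determinant is read off
directly: `B_{k+1}` is the antidiagonal matrix, `B_{2k+2}` reduces to a signed cyclic permutation
matrix of determinant `1`, and in all other cases `B_n` has a zero row or two opposite rows.
-/

open Polynomial Finset Matrix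

/-- The weight polynomials `M_{n,k}(t)` of Motzkin paths from `(0,0)` to `(n,k)`. -/
noncomputable def motzkinPoly : ℕ → ℤ → Polynomial ℤ
  | 0, k => if k = 0 then 1 else 0
  | n + 1, k =>
      if k < 0 then 0 else
        motzkinPoly n (k - 1) + X * motzkinPoly n k + motzkinPoly n (k + 1)
  termination_by n _ => n

section Jacobi

variable {R : Type*} [CommRing R]

def jacobi (t : R) (v : ℤ → R) (a : ℤ) : R :=
  v (a - 1) + t * v a + v (a + 1)

theorem sum_range_mul_jacobi (t : R) (u v : ℤ → R) (N : ℕ) (hu : u (-1) = 0)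
    (hv : v (-1) = 0) (hv₁ : v (N - 1) = 0) (hv₂ : v N = 0) :
    ∑ a ∈ range N, u a * jacobi t v a = ∑ a ∈ range N, jacobi t u a * v a := by
  have shift (F : ℕ → R) (h₀ : F 0 = 0) (hN : F N = 0) :
      ∑ a ∈ range N, F (a + 1) = ∑ a ∈ range N, F a := by
    have := (sum_range_succ' F N).symm.trans (sum_range_succ F N)
    rwa [h₀, hN, add_zero, add_zero] at this
  have down := shift (fun a => u a * v (a - 1)) (by simp [hv]) (by simp [hv₁])
  have up := shift (fun a => u (a - 1) * v a) (by simp [hu]) (by simp [hv₂])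
  push_cast at down up
  simp only [add_sub_cancel_right] at down up
  simp only [jacobi, mul_add, add_mul, sum_add_distrib, mul_left_comm _ t, mul_assoc, ← down, up]
  abel

end Jacobi

section LeadingBlock

variable {R : Type*}

def leadingBlock (f : ℕ → ℕ → R) (n : ℕ) : Matrix (Fin n) (Fin n) R :=
  of fun i j => f i j

@[simp]
theorem leadingBlock_apply (f : ℕ → ℕ → R) (n : ℕ) (i j : Fin n) :
    leadingBlock f n i j = f i j :=
  rfl

theorem leadingBlock_congr {f g : ℕ → ℕ → R} {n : ℕ} (h : ∀ a < n, ∀ b < n, f a b = g a b) :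
    leadingBlock f n = leadingBlock g n :=
  ext fun i j => h i i.2 j j.2

variable [CommRing R]

theorem det_leadingBlock_add (f : ℕ → ℕ → R) (m l : ℕ)
    (h : ∀ a b, a < m → m ≤ b → b < m + l → f a b = 0) :
    (leadingBlock f (m + l)).det =
      (leadingBlock f m).det * (leadingBlock (fun i j => f (m + i) (m + j)) l).det := by
  rw [← det_submatrix_equiv_self finSumFinEquiv,
    ← det_fromBlocks_zero₁₂ _ (of fun (i : Fin l) (j : Fin m) => f (m + i) j)]
  congr 1
  ext (i | i) (j | j) <;> simp [leadingBlock]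
  exact h i _ i.2 (by omega) (by omega)

theorem leadingBlock_add_mul (f : ℕ → ℕ → R) (σ : ℕ → ℕ) (c : ℕ → R) {n : ℕ}
    (h : ∀ a < n, c a ≠ 0 → σ a < n) :
    leadingBlock (fun a b => f a b + c a * f (σ a) b) n =
      (1 + of fun a b : Fin n => if (b : ℕ) = σ a then c a else 0) * leadingBlock f n := by
  ext a b
  rw [add_mul, one_mul, Matrix.add_apply, mul_apply]
  by_cases hc : c a = 0
  · simp [leadingBlock, hc]
  · rw [Fintype.sum_eq_single ⟨σ a, h a a.2 hc⟩ fun d hd => by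
      rw [of_apply, if_neg fun hd' => hd (Fin.ext hd'), zero_mul]]
    simp [leadingBlock]

theorem det_leadingBlock_add_mul_of_lt (f : ℕ → ℕ → R) (σ : ℕ → ℕ) (c : ℕ → R) {n : ℕ}
    (h : ∀ a < n, c a ≠ 0 → a < σ a ∧ σ a < n) :
    (leadingBlock (fun a b => f a b + c a * f (σ a) b) n).det = (leadingBlock f n).det := by
  rw [leadingBlock_add_mul f σ c fun a ha hc => (h a ha hc).2, det_mul,
    det_of_isUpperTriangular, prod_eq_one, one_mul]
  · intro a _
    rcases eq_or_ne (c a) 0 with hc | hc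
    · simp [hc]
    · simp [(h a a.2 hc).1.ne]
  · intro a b (hba : b < a)
    rcases eq_or_ne (c a) 0 with hc | hc
    · simp [hc, one_apply_ne hba.ne']
    · have : (b : ℕ) ≠ σ a := by have := (h a a.2 hc).1; omega
      simp [this, one_apply_ne hba.ne']

theorem det_leadingBlock_add_mul_of_gt (f : ℕ → ℕ → R) (σ : ℕ → ℕ) (c : ℕ → R) {n : ℕ}
    (h : ∀ a < n, c a ≠ 0 → σ a < a) :
    (leadingBlock (fun a b => f a b + c a * f (σ a) b) n).det = (leadingBlock f n).det := by
  rw [leadingBlock_add_mul f σ c fun a ha hc => (h a ha hc).trans ha, det_mul,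
    det_of_isLowerTriangular, prod_eq_one, one_mul]
  · intro a _
    rcases eq_or_ne (c a) 0 with hc | hc
    · simp [hc]
    · simp [(h a a.2 hc).ne']
  · intro a b (hab : a < b)
    rcases eq_or_ne (c a) 0 with hc | hc
    · simp [hc, one_apply_ne hab.ne]
    · have : (b : ℕ) ≠ σ a := by have := h a a.2 hc; omega
      simp [this, one_apply_ne hab.ne]

theorem det_antidiagonal (m : ℕ) :
    (leadingBlock (fun i j => if i + j + 1 = m then (1 : R) else 0) m).det =
      (-1) ^ m.choose 2 := by
  induction m with
  | zero => simp
  | succ m ih =>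
    rw [det_succ_row_zero, Fintype.sum_eq_single (Fin.last m) fun j hj => ?_]
    · have hminor : (leadingBlock (fun i j => if i + j + 1 = m + 1 then (1 : R) else 0)
          (m + 1)).submatrix Fin.succ (Fin.last m).succAbove =
          leadingBlock (fun i j => if i + j + 1 = m then 1 else 0) m := by
        refine Matrix.ext fun i j => ?_
        simp [leadingBlock, Fin.succAbove_last, add_right_comm _ 1]
      rw [hminor, ih, Nat.choose_succ_succ, Nat.choose_one_right]
      simp [leadingBlock, pow_add]
    · have : (j : ℕ) ≠ m := fun h => hj (Fin.ext h)
      simp [leadingBlock, this]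

end LeadingBlock

open Fin.NatCast in
theorem coe_finRotate_pow (m j : ℕ) (i : Fin (m + 1)) :
    ((finRotate (m + 1) ^ j) i : ℕ) = (i + j) % (m + 1) := by
  have : (finRotate (m + 1) ^ j) i = i + (j : Fin (m + 1)) := by
    induction j with
    | zero => simp
    | succ j ih =>
      rw [pow_succ', Equiv.Perm.mul_apply, ih, finRotate_apply, Nat.cast_succ, add_assoc]
  rw [this, Fin.val_add, Fin.val_natCast, Nat.add_mod_mod]

section Motzkin

theorem motzkinPoly_zero (k : ℤ) : motzkinPoly 0 k = if k = 0 then 1 else 0 := by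
  rw [motzkinPoly]

theorem motzkinPoly_succ {n : ℕ} {k : ℤ} (hk : 0 ≤ k) :
    motzkinPoly (n + 1) k = jacobi X (motzkinPoly n) k := by
  rw [motzkinPoly, if_neg (not_lt.2 hk), jacobi]

theorem motzkinPoly_of_neg {n : ℕ} {k : ℤ} (hk : k < 0) : motzkinPoly n k = 0 := by
  cases n with
  | zero => rw [motzkinPoly_zero, if_neg hk.ne]
  | succ n => rw [motzkinPoly, if_pos hk]

theorem motzkinPoly_of_lt {n : ℕ} {k : ℤ} (h : (n : ℤ) < k) : motzkinPoly n k = 0 := by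
  induction n generalizing k with
  | zero => rw [motzkinPoly_zero, if_neg (by omega)]
  | succ n ih =>
    rw [motzkinPoly_succ (by omega), jacobi, ih (by omega), ih (by omega), ih (by omega)]
    ring

theorem motzkinPoly_self (n : ℕ) : motzkinPoly n n = 1 := by
  induction n with
  | zero => simp [motzkinPoly_zero]
  | succ n ih =>
    rw [Nat.cast_succ, motzkinPoly_succ (by omega), jacobi, add_sub_cancel_right, ih,
      motzkinPoly_of_lt (by omega), motzkinPoly_of_lt (by omega)]
    ring

end Motzkin

/-- The multiplicity of `U_k` in `U_a U_b = U_{|a-b|} + U_{|a-b|+2} + ⋯ + U_{a+b}`. -/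
def clebschGordan (k : ℕ) (a b : ℤ) : ℤ :=
  if 0 ≤ a ∧ 0 ≤ b ∧ k ≤ a + b ∧ a - b ≤ k ∧ b - a ≤ k ∧ 2 ∣ a + b - k then 1 else 0

section ClebschGordan

variable (k : ℕ)

theorem clebschGordan_of_neg_left {a : ℤ} (ha : a < 0) (b : ℤ) : clebschGordan k a b = 0 := by
  rw [clebschGordan, if_neg (by omega)]

theorem clebschGordan_of_neg_right (a : ℤ) {b : ℤ} (hb : b < 0) : clebschGordan k a b = 0 := by
  rw [clebschGordan, if_neg (by omega)]

theorem clebschGordan_zero_right (a : ℤ) : clebschGordan k a 0 = if a = k then 1 else 0 := by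
  unfold clebschGordan
  split_ifs <;> omega

theorem jacobi_clebschGordan_comm {R : Type*} [CommRing R] (t : R) {a b : ℤ} (ha : 0 ≤ a)
    (hb : 0 ≤ b) :
    jacobi t (fun x => (clebschGordan k x b : R)) a =
      jacobi t (fun y => (clebschGordan k a y : R)) b := by
  have h : clebschGordan k (a - 1) b + clebschGordan k (a + 1) b =
      clebschGordan k a (b - 1) + clebschGordan k a (b + 1) := by
    unfold clebschGordan
    split_ifs <;> omega
  have hR := congrArg (Int.cast : ℤ → R) h
  push_cast at hR
  simp only [jacobi]
  linear_combination hR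

end ClebschGordan

section Convolution

variable {R : Type*} [CommRing R]

def clebschGordanSum (k N : ℕ) (v : ℤ → R) (a : ℤ) : R :=
  ∑ b ∈ range N, (clebschGordan k a b : R) * v b

theorem clebschGordanSum_succ (k : ℕ) {N : ℕ} {v : ℤ → R} (hv : v N = 0) :
    clebschGordanSum k (N + 1) v = clebschGordanSum k N v := by
  ext a
  rw [clebschGordanSum, sum_range_succ, hv, mul_zero, add_zero, clebschGordanSum]

theorem clebschGordanSum_of_neg (k N : ℕ) (v : ℤ → R) {a : ℤ} (ha : a < 0) :
    clebschGordanSum k N v a = 0 :=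
  sum_eq_zero fun b _ => by rw [clebschGordan_of_neg_left k ha, Int.cast_zero, zero_mul]

theorem clebschGordanSum_motzkinPoly_zero (k : ℕ) {N : ℕ} (hN : 0 < N) (a : ℤ) :
    clebschGordanSum k N (motzkinPoly 0) a = if a = k then 1 else 0 := by
  rw [clebschGordanSum, sum_eq_single 0 (fun b _ hb => by simp [motzkinPoly_zero, hb])
    (by simp [hN.ne'])]
  simp [motzkinPoly_zero, clebschGordan_zero_right]

theorem clebschGordanSum_jacobi (k : ℕ) (t : R) {N : ℕ} {v : ℤ → R} (hv : v (-1) = 0)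
    (hv₁ : v (N - 1) = 0) (hv₂ : v N = 0) {a : ℤ} (ha : 0 ≤ a) :
    clebschGordanSum k N (jacobi t v) a = jacobi t (clebschGordanSum k N v) a := by
  calc clebschGordanSum k N (jacobi t v) a
      = ∑ b ∈ range N, jacobi t (fun y => (clebschGordan k a y : R)) b * v b :=
        sum_range_mul_jacobi t (fun y => (clebschGordan k a y : R)) v N
          (by simp [clebschGordan_of_neg_right]) hv hv₁ hv₂
    _ = ∑ b ∈ range N, jacobi t (fun x => (clebschGordan k x b : R)) a * v b :=
        sum_congr rfl fun b _ => by rw [jacobi_clebschGordan_comm k t ha (Nat.cast_nonneg b)]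
    _ = jacobi t (clebschGordanSum k N v) a := by
        simp only [jacobi, clebschGordanSum, add_mul, sum_add_distrib, mul_sum, mul_assoc]

theorem clebschGordanSum_motzkinPoly_succ (k N j : ℕ) :
    clebschGordanSum k N (motzkinPoly (j + 1)) =
      clebschGordanSum k N (jacobi X (motzkinPoly j)) :=
  funext fun _ => sum_congr rfl fun b _ => by rw [motzkinPoly_succ (Nat.cast_nonneg b)]

theorem motzkinPoly_add_eq_sum (k : ℕ) {i j N : ℕ} (hi : i < N) (hj : j < N) :
    motzkinPoly (i + j) k =
      ∑ a ∈ range N, motzkinPoly i a * clebschGordanSum k N (motzkinPoly j) a := by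
  induction j generalizing i N with
  | zero =>
    simp only [clebschGordanSum_motzkinPoly_zero k (by omega : 0 < N), Nat.cast_inj, mul_ite,
      mul_one, mul_zero, sum_ite_eq', mem_range, add_zero]
    split_ifs with hk
    · rfl
    · exact motzkinPoly_of_lt (by omega)
  | succ j ih =>
    have hMi : motzkinPoly i N = 0 := motzkinPoly_of_lt (by omega)
    set T := clebschGordanSum k N (motzkinPoly j)
    -- On the range `N + 1`, `M_i` vanishes at both ends, as `sum_range_mul_jacobi` needs.
    calc motzkinPoly (i + (j + 1)) k = motzkinPoly ((i + 1) + j) k := by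
          rw [add_right_comm, add_assoc]
      _ = ∑ a ∈ range (N + 1),
            motzkinPoly (i + 1) a * clebschGordanSum k (N + 1) (motzkinPoly j) a :=
          ih (by omega) (by omega)
      _ = ∑ a ∈ range (N + 1), jacobi X (motzkinPoly i) a * T a := by
          rw [clebschGordanSum_succ k (motzkinPoly_of_lt (by omega))]
          exact sum_congr rfl fun a _ => by rw [motzkinPoly_succ (Nat.cast_nonneg a)]
      _ = ∑ a ∈ range (N + 1), T a * jacobi X (motzkinPoly i) a :=
          sum_congr rfl fun a _ => mul_comm _ _
      _ = ∑ a ∈ range (N + 1), jacobi X T a * motzkinPoly i a :=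
          sum_range_mul_jacobi X T (motzkinPoly i) (N + 1)
            (clebschGordanSum_of_neg k N _ (by norm_num)) (motzkinPoly_of_neg (by norm_num))
            (by simpa using hMi) (motzkinPoly_of_lt (by omega))
      _ = ∑ a ∈ range N, motzkinPoly i a * clebschGordanSum k N (motzkinPoly (j + 1)) a := by
          rw [sum_range_succ, hMi, mul_zero, add_zero, clebschGordanSum_motzkinPoly_succ]
          exact sum_congr rfl fun a _ => by
            rw [mul_comm, clebschGordanSum_jacobi k X (motzkinPoly_of_neg (by norm_num))
              (motzkinPoly_of_lt (by omega)) (motzkinPoly_of_lt (by omega)) (Nat.cast_nonneg a)]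

end Convolution

theorem det_leadingBlock_motzkinPoly (n : ℕ) :
    (leadingBlock (fun i a => motzkinPoly i a) n).det = 1 := by
  rw [det_of_isLowerTriangular (leadingBlock (fun i a => motzkinPoly i a) n)
      fun i j (hij : i < j) => motzkinPoly_of_lt (by exact_mod_cast hij)]
  exact prod_eq_one fun i _ => motzkinPoly_self i

theorem hankel_motzkinPoly_eq_mul (k n : ℕ) :
    (of fun i j : Fin n => motzkinPoly ((i : ℕ) + (j : ℕ)) (k : ℤ)) =
      leadingBlock (fun i a => motzkinPoly i a) n *
        (leadingBlock (fun a b => clebschGordan k a b) n).map (Int.cast) *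
          (leadingBlock (fun i a => motzkinPoly i a) n)ᵀ := by
  refine Matrix.ext fun i j => ?_
  rw [of_apply, motzkinPoly_add_eq_sum k i.2 j.2]
  simp only [mul_apply, transpose_apply, map_apply, leadingBlock_apply, clebschGordanSum,
    ← Fin.sum_univ_eq_sum_range, mul_sum, sum_mul, mul_assoc]
  exact sum_comm

theorem det_hankel_motzkinPoly (k n : ℕ) :
    (of fun i j : Fin n => motzkinPoly ((i : ℕ) + (j : ℕ)) (k : ℤ)).det =
      ((leadingBlock (fun a b => clebschGordan k a b) n).det : ℤ[X]) := by
  rw [hankel_motzkinPoly_eq_mul, det_mul, det_mul, det_transpose, det_leadingBlock_motzkinPoly,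
    Int.cast_det, one_mul, mul_one]

def clebschGordanDiff (k a b : ℕ) : ℤ :=
  (if b = a + k then 1 else 0) + (if a + b = k ∧ 0 < a then 1 else 0) -
    (if a = b + k + 2 then 1 else 0)

theorem clebschGordan_sub_clebschGordan_sub_two (k a b : ℕ) :
    clebschGordan k a b - clebschGordan k (a - 2) b = clebschGordanDiff k a b := by
  unfold clebschGordan clebschGordanDiff
  split_ifs <;> omega

theorem det_leadingBlock_clebschGordan (k n : ℕ) :
    (leadingBlock (fun a b => clebschGordan k a b) n).det =
      (leadingBlock (clebschGordanDiff k) n).det := by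
  rw [← det_leadingBlock_add_mul_of_gt _ (· - 2) (fun a => if 2 ≤ a then -1 else 0)
    fun a _ hc => by_contra fun h => hc (if_neg (by omega))]
  refine congrArg det (leadingBlock_congr fun a _ b _ => ?_)
  rw [← clebschGordan_sub_clebschGordan_sub_two]
  split_ifs with h
  · push_cast [h]
    ring
  · rw [clebschGordan_of_neg_left k (a := a - 2) (by omega), zero_mul, sub_zero, add_zero]

/-- On `Fin (2k + 2)`: the permutation matrix of `i ↦ i + k`, with sign `-1` where it wraps. -/
def signedRotation (k i j : ℕ) : ℤ :=
  (if j = i + k then 1 else 0) - (if i = j + k + 2 then 1 else 0)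

theorem det_signedRotation (k : ℕ) : (leadingBlock (signedRotation k) (2 * k + 2)).det = 1 := by
  set σ := finRotate (2 * k + 1 + 1) ^ k
  have hσ (i : Fin (2 * k + 2)) : (σ i : ℕ) =
      if (i : ℕ) + k < 2 * k + 2 then i + k else i + k - (2 * k + 2) := by
    rw [coe_finRotate_pow]
    split_ifs with h
    · exact Nat.mod_eq_of_lt h
    · rw [Nat.mod_eq_sub_mod (by omega), Nat.mod_eq_of_lt (by omega)]
  have hD : leadingBlock (signedRotation k) (2 * k + 2) =
      (diagonal fun j : Fin (2 * k + 2) => if (j : ℕ) < k then (-1 : ℤ) else 1).submatrix σ id := by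
    refine Matrix.ext fun i j => ?_
    have := hσ i
    simp only [leadingBlock_apply, submatrix_apply, id, diagonal_apply, Fin.ext_iff,
      signedRotation]
    split_ifs at this <;> split_ifs <;> omega
  have hsigns : ∏ j ∈ range (2 * k + 2), (if j < k then (-1 : ℤ) else 1) = (-1) ^ k := by
    rw [show 2 * k + 2 = k + (k + 2) by ring, prod_range_add,
      prod_congr rfl fun j hj => if_pos (mem_range.1 hj), prod_const, card_range,
      prod_congr rfl fun j _ => if_neg (by omega), prod_const_one, mul_one]
  rw [hD, det_permute, det_diagonal,
    Fin.prod_univ_eq_prod_range (fun j => if j < k then (-1 : ℤ) else 1), hsigns, map_pow,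
    sign_finRotate, Odd.neg_one_pow ⟨k, by omega⟩]
  push_cast
  rw [← mul_pow]
  norm_num

theorem det_clebschGordanDiff_add_period {k n : ℕ} (hn : k + 1 ≤ n) :
    (leadingBlock (clebschGordanDiff k) (n + (2 * k + 2))).det =
      (leadingBlock (clebschGordanDiff k) n).det := by
  -- For `n - k ≤ a < n`, row `a + 2k + 2` is `-e_{a+k}`; adding it to row `a` clears the
  -- upper right block.
  set c : ℕ → ℤ := fun a => if n ≤ a + k ∧ a < n then 1 else 0
  set f : ℕ → ℕ → ℤ := fun a b =>
    clebschGordanDiff k a b + c a * clebschGordanDiff k (a + (2 * k + 2)) b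
  calc (leadingBlock (clebschGordanDiff k) (n + (2 * k + 2))).det
      = (leadingBlock f (n + (2 * k + 2))).det :=
        (det_leadingBlock_add_mul_of_lt _ _ _ fun a _ hc => by
          simp only [c] at hc; split_ifs at hc <;> omega).symm
    _ = (leadingBlock f n).det * (leadingBlock (fun i j => f (n + i) (n + j)) (2 * k + 2)).det :=
        det_leadingBlock_add _ _ _ fun a b ha hb hb' => by
          simp only [f, c, clebschGordanDiff]; split_ifs <;> omega
    _ = (leadingBlock (clebschGordanDiff k) n).det *
          (leadingBlock (signedRotation k) (2 * k + 2)).det := by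
        have hupper : leadingBlock f n = leadingBlock (clebschGordanDiff k) n :=
          leadingBlock_congr fun a ha b hb => by
            simp only [f, c, clebschGordanDiff]; split_ifs <;> omega
        have hlower : leadingBlock (fun i j => f (n + i) (n + j)) (2 * k + 2) =
            leadingBlock (signedRotation k) (2 * k + 2) :=
          leadingBlock_congr fun i _ j _ => by
            simp only [f, c, clebschGordanDiff, signedRotation]; split_ifs <;> omega
        rw [hupper, hlower]
    _ = (leadingBlock (clebschGordanDiff k) n).det := by rw [det_signedRotation, mul_one]

theorem det_clebschGordanDiff_period (k : ℕ) :
    (leadingBlock (clebschGordanDiff k) (2 * k + 2)).det = 1 := by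
  -- Row `2k + 2 - a` is `-e_{k-a}`; adding it to row `a` (`1 ≤ a ≤ k`) leaves `e_{a+k}`.
  rw [← det_leadingBlock_add_mul_of_lt _ (2 * k + 2 - ·) (fun a => if 1 ≤ a ∧ a ≤ k then 1 else 0)
    fun a _ hc => by_contra fun h => hc (if_neg (by omega))]
  refine (congrArg det (leadingBlock_congr fun a ha b hb => ?_)).trans (det_signedRotation k)
  simp only [clebschGordanDiff, signedRotation]
  split_ifs <;> omega

theorem det_clebschGordanDiff_succ (k : ℕ) :
    (leadingBlock (clebschGordanDiff k) (k + 1)).det = (-1) ^ (k + 1).choose 2 := by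
  rw [← det_antidiagonal]
  refine congrArg det (leadingBlock_congr fun a ha b hb => ?_)
  simp only [clebschGordanDiff]
  split_ifs <;> omega

theorem det_clebschGordanDiff_of_lt {k n : ℕ} (h0 : 0 < n) (hn : n < 3 * k + 3)
    (h₁ : n ≠ k + 1) (h₂ : n ≠ 2 * k + 2) : (leadingBlock (clebschGordanDiff k) n).det = 0 := by
  -- Row `0` is `e_k`, row `k + 1` is `e_{2k+1}`, and row `2k + 2` is `-e_k` (as `n ≤ 3k + 2`).
  rcases h₁.lt_or_gt with h | h
  · exact det_eq_zero_of_row_eq_zero ⟨0, h0⟩ fun b => by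
      simp only [leadingBlock_apply]; grind [clebschGordanDiff]
  rcases h₂.lt_or_gt with h' | h'
  · exact det_eq_zero_of_row_eq_zero ⟨k + 1, h⟩ fun b => by
      simp only [leadingBlock_apply]; grind [clebschGordanDiff]
  · rw [← det_updateRow_add_self _ (i := ⟨0, h0⟩) (j := ⟨2 * k + 2, h'⟩) (by simp)]
    exact det_eq_zero_of_row_eq_zero ⟨0, h0⟩ fun b => by
      simp only [updateRow_self, Pi.add_apply, leadingBlock_apply]; grind [clebschGordanDiff]

theorem det_clebschGordanDiff_mul (k : ℕ) : ∀ N : ℕ,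
    (leadingBlock (clebschGordanDiff k) ((k + 1) * N)).det = (-1) ^ ((k + 1).choose 2 * N)
  | 0 => by rw [mul_zero, mul_zero, pow_zero]; exact det_isEmpty
  | 1 => by rw [mul_one, mul_one, det_clebschGordanDiff_succ]
  | 2 => by
    rw [show (k + 1) * 2 = 2 * k + 2 by ring, det_clebschGordanDiff_period, pow_mul',
      neg_one_sq, one_pow]
  | N + 3 => by
    rw [show (k + 1) * (N + 3) = (k + 1) * (N + 1) + (2 * k + 2) by ring,
      det_clebschGordanDiff_add_period (by nlinarith), det_clebschGordanDiff_mul k (N + 1),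
      show (k + 1).choose 2 * (N + 3) = (k + 1).choose 2 * (N + 1) + 2 * (k + 1).choose 2 by ring,
      pow_add, pow_mul (-1 : ℤ) 2, neg_one_sq, one_pow, mul_one]

theorem det_clebschGordanDiff_of_not_dvd {k n : ℕ} (h : ¬(k + 1) ∣ n) :
    (leadingBlock (clebschGordanDiff k) n).det = 0 := by
  induction n using Nat.strong_induction_on with
  | _ n ih =>
    by_cases hn : n < 3 * k + 3
    · refine det_clebschGordanDiff_of_lt (Nat.pos_of_ne_zero ?_) hn ?_ ?_ <;>
        rintro rfl
      exacts [h (dvd_zero _), h dvd_rfl, h ⟨2, by ring⟩]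
    · obtain ⟨m, rfl⟩ : ∃ m, n = m + (2 * k + 2) := ⟨n - (2 * k + 2), by omega⟩
      rw [det_clebschGordanDiff_add_period (by omega)]
      exact ih m (by omega) fun hm => h (dvd_add hm ⟨2, by ring⟩)

/-- `d_0^{(k)}((k+1)n, t) = (-1)^{C(k+1,2)·n}` and `d_0^{(k)}(n,t) = 0` if `(k+1) ∤ n`. -/
theorem hankel_det_column_k (k : ℕ) :
    (∀ n : ℕ,
      Matrix.det (Matrix.of fun i j : Fin ((k + 1) * n) =>
          motzkinPoly ((i : ℕ) + (j : ℕ)) (k : ℤ)) =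
        (-1 : Polynomial ℤ) ^ ((k + 1).choose 2 * n)) ∧
    (∀ n : ℕ, ¬ (k + 1) ∣ n →
      Matrix.det (Matrix.of fun i j : Fin n =>
          motzkinPoly ((i : ℕ) + (j : ℕ)) (k : ℤ)) = 0) := by
  refine ⟨fun n => ?_, fun n hn => ?_⟩
  · rw [det_hankel_motzkinPoly, det_leadingBlock_clebschGordan, det_clebschGordanDiff_mul]
    push_cast
    rfl
  · rw [det_hankel_motzkinPoly, det_leadingBlock_clebschGordan,
      det_clebschGordanDiff_of_not_dvd hn, Int.cast_zero]
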